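/- arXiv:2302.04610 — 3 statements merged into one kernel-verified Lean document; each statement's English description precedes it below -/
import Mathlib

section
/- Let (X,d_X) and (Y,d_Y) be complete separable metric spaces. Let μ_c, μ_a be Borel probability measures on X and ν_c, ν_a be Borel probability measures on Y, let ε_1, ε_2 ∈ [0,1], and set μ = (1−ε_1)μ_c + ε_1 μ_a and ν = (1−ε_2)ν_c + ε_2 ν_a. Assume KL(μ_a,μ_c) and KL(ν_a,ν_c) are finite and strictly positive, and KL(μ_c,μ_a) and KL(ν_c,ν_a) are finite. If ρ_1 = ε_1·KL(μ_a,μ_c) and ρ_2 = ε_2·KL(ν_a,ν_c), then for all τ_1, τ_2 ≥ 0: GW^rob_{ρ_1,ρ_2}(μ,ν) ≤ GW(μ_c,ν_c). -/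
/-! Take `α = μc` and `β = νc`. They are admissible because the KL divergence is convex in its
first argument: writing it as the f-divergence `∫ klFun (dμ/dμc) dμc` with `klFun` convex and
`klFun 1 = 0`, the density `(1 - ε₁) + ε₁ dμa/dμc` of the contaminated `μ` gives
`KL(μ, μc) ≤ ε₁ KL(μa, μc) = ρ₁`. And `F(μc, νc) ≤ GW(μc, νc)`, since a coupling of `μc` and `νc`
is a finite plan whose marginal penalties `GKL(μc, μc)` and `GKL(νc, νc)` vanish. -/

open MeasureTheory ENNReal Classical

/-- Kullback–Leibler divergence between two measures: `∫ log (dρ/dσ) dρ` when `ρ ≪ σ`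
and the log-likelihood ratio is integrable, and `∞` otherwise. -/
noncomputable def KLdiv {X : Type*} [MeasurableSpace X] (ρ σ : Measure X) : ℝ≥0∞ :=
  if ρ ≪ σ ∧ Integrable (llr ρ σ) ρ then ENNReal.ofReal (∫ x, llr ρ σ x ∂ρ) else ⊤

/-- Generalized Kullback–Leibler divergence between finite positive measures:
`∫ log (dρ/dσ) dρ - ρ(X) + σ(X)` when `ρ ≪ σ` (and the integral is finite), `∞` otherwise. -/
noncomputable def GKLdiv {X : Type*} [MeasurableSpace X] (ρ σ : Measure X) : ℝ≥0∞ :=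
  if ρ ≪ σ ∧ Integrable (llr ρ σ) ρ then
    ENNReal.ofReal (∫ x, llr ρ σ x ∂ρ - (ρ Set.univ).toReal + (σ Set.univ).toReal) else ⊤

/-- The Gromov–Wasserstein transportation cost of a plan `π`:
`∬ |d_X(x,x') - d_Y(y,y')|² dπ dπ`. -/
noncomputable def GWcost {X Y : Type*} [MetricSpace X] [MetricSpace Y]
    [MeasurableSpace X] [MeasurableSpace Y] (π : Measure (X × Y)) : ℝ≥0∞ :=
  ∫⁻ p, ∫⁻ q, ENNReal.ofReal (|dist p.1 q.1 - dist p.2 q.2| ^ 2) ∂π ∂π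

/-- The Gromov–Wasserstein value: infimum of the cost over couplings of `μ` and `ν`. -/
noncomputable def GW {X Y : Type*} [MetricSpace X] [MetricSpace Y]
    [MeasurableSpace X] [MeasurableSpace Y] (μ : Measure X) (ν : Measure Y) : ℝ≥0∞ :=
  ⨅ (π : Measure (X × Y)) (_ : π.map Prod.fst = μ) (_ : π.map Prod.snd = ν), GWcost π

/-- `F(α,β)`: infimum over finite positive measures `π` on `X × Y` of the GW cost plus
KL penalties `τ₁ GKL(π₁, α) + τ₂ GKL(π₂, β)` on the marginals. -/
noncomputable def Fobj {X Y : Type*} [MetricSpace X] [MetricSpace Y]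
    [MeasurableSpace X] [MeasurableSpace Y] (τ₁ τ₂ : ℝ)
    (α : Measure X) (β : Measure Y) : ℝ≥0∞ :=
  ⨅ (π : Measure (X × Y)) (_ : IsFiniteMeasure π),
    GWcost π + ENNReal.ofReal τ₁ * GKLdiv (π.map Prod.fst) α
      + ENNReal.ofReal τ₂ * GKLdiv (π.map Prod.snd) β

/-- The robust Gromov–Wasserstein value `GW^rob_{ρ₁,ρ₂}(μ,ν)`. -/
noncomputable def GWrob {X Y : Type*} [MetricSpace X] [MetricSpace Y]
    [MeasurableSpace X] [MeasurableSpace Y] (ρ₁ ρ₂ τ₁ τ₂ : ℝ)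
    (μ : Measure X) (ν : Measure Y) : ℝ≥0∞ :=
  ⨅ (α : Measure X) (_ : IsProbabilityMeasure α) (_ : KLdiv μ α ≤ ENNReal.ofReal ρ₁)
    (β : Measure Y) (_ : IsProbabilityMeasure β) (_ : KLdiv ν β ≤ ENNReal.ofReal ρ₂),
    Fobj τ₁ τ₂ α β

open InformationTheory

lemma KLdiv_eq_klDiv {X : Type*} [MeasurableSpace X] {ρ σ : Measure X}
    (h : ρ Set.univ = σ Set.univ) : KLdiv ρ σ = klDiv ρ σ := by
  by_cases hρσ : ρ ≪ σ ∧ Integrable (llr ρ σ) ρ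
  · rw [KLdiv, if_pos hρσ, klDiv_of_ac_of_integrable hρσ.1 hρσ.2, measureReal_def,
      measureReal_def, h, add_sub_cancel_right]
  · rw [KLdiv, if_neg hρσ, eq_comm, klDiv_eq_top_iff]
    exact fun hac hint => hρσ ⟨hac, hint⟩

lemma GKLdiv_eq_klDiv {X : Type*} [MeasurableSpace X] (ρ σ : Measure X) :
    GKLdiv ρ σ = klDiv ρ σ := by
  by_cases hρσ : ρ ≪ σ ∧ Integrable (llr ρ σ) ρ
  · rw [GKLdiv, if_pos hρσ, klDiv_of_ac_of_integrable hρσ.1 hρσ.2, measureReal_def,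
      measureReal_def, sub_add_eq_add_sub]
  · rw [GKLdiv, if_neg hρσ, eq_comm, klDiv_eq_top_iff]
    exact fun hac hint => hρσ ⟨hac, hint⟩

lemma rnDeriv_convexComb_self_ae {X : Type*} [MeasurableSpace X] (σ ρ : Measure X)
    [IsFiniteMeasure σ] [IsFiniteMeasure ρ] {a b : ℝ≥0∞} (ha : a ≠ ⊤) (hb : b ≠ ⊤) :
    (a • σ + b • ρ).rnDeriv σ =ᵐ[σ] fun x => a + b * ρ.rnDeriv σ x := by
  have := σ.smul_finite ha
  have := ρ.smul_finite hb
  filter_upwards [Measure.rnDeriv_add (a • σ) (b • ρ) σ,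
    Measure.rnDeriv_smul_left_of_ne_top σ σ ha, Measure.rnDeriv_smul_left_of_ne_top ρ σ hb,
    Measure.rnDeriv_self σ] with x hadd hσ hρ hself
  simp [hadd, hσ, hρ, hself]

lemma klDiv_convexComb_self_le {X : Type*} [MeasurableSpace X] (σ ρ : Measure X)
    [IsFiniteMeasure σ] [IsFiniteMeasure ρ] (hρσ : ρ ≪ σ) {ε : ℝ} (hε : ε ∈ Set.Icc (0 : ℝ) 1) :
    klDiv (ENNReal.ofReal (1 - ε) • σ + ENNReal.ofReal ε • ρ) σ
      ≤ ENNReal.ofReal ε * klDiv ρ σ := by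
  have := σ.smul_finite (ofReal_ne_top (r := 1 - ε))
  have := ρ.smul_finite (ofReal_ne_top (r := ε))
  have hac : ENNReal.ofReal (1 - ε) • σ + ENNReal.ofReal ε • ρ ≪ σ :=
    (Measure.AbsolutelyContinuous.rfl.smul_left _).add_left (hρσ.smul_left _)
  rw [klDiv_eq_lintegral_klFun_of_ac hac, klDiv_eq_lintegral_klFun_of_ac hρσ,
    ← lintegral_const_mul _ (by fun_prop)]
  refine lintegral_mono_ae ?_
  filter_upwards [rnDeriv_convexComb_self_ae σ ρ ofReal_ne_top ofReal_ne_top,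
    Measure.rnDeriv_lt_top ρ σ] with x hmix hfin
  set f := (ρ.rnDeriv σ x).toReal
  have hdens : ((ENNReal.ofReal (1 - ε) • σ + ENNReal.ofReal ε • ρ).rnDeriv σ x).toReal
      = (1 - ε) • 1 + ε • f := by
    rw [hmix, ENNReal.toReal_add ofReal_ne_top (mul_ne_top ofReal_ne_top hfin.ne),
      ENNReal.toReal_mul, toReal_ofReal (by linarith [hε.2]), toReal_ofReal hε.1]
    simp [f]
  have hconv : klFun ((1 - ε) • 1 + ε • f) ≤ (1 - ε) • klFun 1 + ε • klFun f :=
    convexOn_klFun.2 (Set.mem_Ici.2 zero_le_one) (Set.mem_Ici.2 ENNReal.toReal_nonneg)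
      (by linarith [hε.2]) hε.1 (by ring)
  rw [hdens, ← ofReal_mul hε.1]
  refine ofReal_le_ofReal (hconv.trans_eq ?_)
  simp [klFun_one]

lemma KLdiv_convexComb_self_le {X : Type*} [MeasurableSpace X] (σ ρ : Measure X)
    [IsProbabilityMeasure σ] [IsProbabilityMeasure ρ] (hρσ : KLdiv ρ σ ≠ ⊤)
    {ε : ℝ} (hε : ε ∈ Set.Icc (0 : ℝ) 1) :
    KLdiv (ENNReal.ofReal (1 - ε) • σ + ENNReal.ofReal ε • ρ) σ
      ≤ ENNReal.ofReal (ε * (KLdiv ρ σ).toReal) := by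
  have hmass : (ENNReal.ofReal (1 - ε) • σ + ENNReal.ofReal ε • ρ) Set.univ = σ Set.univ := by
    have hsum : ENNReal.ofReal (1 - ε) + ENNReal.ofReal ε = 1 := by
      rw [← ofReal_add (by linarith [hε.2]) hε.1, sub_add_cancel, ofReal_one]
    simp [hsum]
  have hKL : KLdiv ρ σ = klDiv ρ σ := KLdiv_eq_klDiv (by simp)
  have hac : ρ ≪ σ := (klDiv_ne_top_iff.1 (hKL ▸ hρσ)).1
  rw [KLdiv_eq_klDiv hmass, ofReal_mul hε.1, ofReal_toReal hρσ, hKL]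
  exact klDiv_convexComb_self_le σ ρ hac hε

lemma Fobj_le_GW {X Y : Type*} [MetricSpace X] [MetricSpace Y]
    [MeasurableSpace X] [MeasurableSpace Y] (τ₁ τ₂ : ℝ) (μ : Measure X) (ν : Measure Y)
    [IsFiniteMeasure μ] [SigmaFinite ν] :
    Fobj τ₁ τ₂ μ ν ≤ GW μ ν := by
  refine le_iInf fun π => le_iInf fun hπ₁ => le_iInf fun hπ₂ => ?_
  have : IsFiniteMeasure π := by
    rw [← Measure.isFiniteMeasure_map_iff measurable_fst.aemeasurable, hπ₁]
    infer_instance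
  calc Fobj τ₁ τ₂ μ ν
      ≤ GWcost π + ENNReal.ofReal τ₁ * GKLdiv (π.map Prod.fst) μ
          + ENNReal.ofReal τ₂ * GKLdiv (π.map Prod.snd) ν := iInf₂_le π this
    _ = GWcost π := by simp [hπ₁, hπ₂, GKLdiv_eq_klDiv]

lemma GWrob_le_Fobj {X Y : Type*} [MetricSpace X] [MetricSpace Y]
    [MeasurableSpace X] [MeasurableSpace Y] {ρ₁ ρ₂ : ℝ} (τ₁ τ₂ : ℝ)
    {μ : Measure X} {ν : Measure Y} (α : Measure X) (β : Measure Y)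
    [IsProbabilityMeasure α] [IsProbabilityMeasure β]
    (hα : KLdiv μ α ≤ ENNReal.ofReal ρ₁) (hβ : KLdiv ν β ≤ ENNReal.ofReal ρ₂) :
    GWrob ρ₁ ρ₂ τ₁ τ₂ μ ν ≤ Fobj τ₁ τ₂ α β :=
  iInf₂_le_of_le α inferInstance <| iInf_le_of_le hα <|
    iInf₂_le_of_le β inferInstance <| iInf_le_of_le hβ le_rfl

theorem rgw_upper_bound_tight_general
    {X Y : Type*}
    [MetricSpace X]
    [MeasurableSpace X]
    [MetricSpace Y]
    [MeasurableSpace Y]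
    (μc μa : Measure X) (νc νa : Measure Y)
    [IsProbabilityMeasure μc] [IsProbabilityMeasure μa]
    [IsProbabilityMeasure νc] [IsProbabilityMeasure νa]
    (ε₁ ε₂ : ℝ) (hε₁ : ε₁ ∈ Set.Icc (0 : ℝ) 1) (hε₂ : ε₂ ∈ Set.Icc (0 : ℝ) 1)
    (μ : Measure X) (ν : Measure Y)
    (hμ : μ = ENNReal.ofReal (1 - ε₁) • μc + ENNReal.ofReal ε₁ • μa)
    (hν : ν = ENNReal.ofReal (1 - ε₂) • νc + ENNReal.ofReal ε₂ • νa)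
    (hμac_fin : KLdiv μa μc ≠ ⊤)
    (hνac_fin : KLdiv νa νc ≠ ⊤)
    (ρ₁ ρ₂ τ₁ τ₂ : ℝ)
    (hρ₁ : ρ₁ = ε₁ * (KLdiv μa μc).toReal)
    (hρ₂ : ρ₂ = ε₂ * (KLdiv νa νc).toReal) :
    GWrob ρ₁ ρ₂ τ₁ τ₂ μ ν ≤ GW μc νc := by
  have hμc : KLdiv μ μc ≤ ENNReal.ofReal ρ₁ :=
    hμ ▸ hρ₁ ▸ KLdiv_convexComb_self_le μc μa hμac_fin hε₁
  have hνc : KLdiv ν νc ≤ ENNReal.ofReal ρ₂ :=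
    hν ▸ hρ₂ ▸ KLdiv_convexComb_self_le νc νa hνac_fin hε₂
  exact (GWrob_le_Fobj τ₁ τ₂ μc νc hμc hνc).trans (Fobj_le_GW τ₁ τ₂ μc νc)

/-- Theorem 1, specialized: with `ρ₁ = ε₁·KL(μ_a,μ_c)` and `ρ₂ = ε₂·KL(ν_a,ν_c)`,
the robust GW value is at most the GW distance between the clean distributions. -/
theorem rgw_upper_bound_tight
    {X Y : Type*}
    [MetricSpace X] [CompleteSpace X] [SecondCountableTopology X]
    [MeasurableSpace X] [BorelSpace X]
    [MetricSpace Y] [CompleteSpace Y] [SecondCountableTopology Y]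
    [MeasurableSpace Y] [BorelSpace Y]
    (μc μa : Measure X) (νc νa : Measure Y)
    [IsProbabilityMeasure μc] [IsProbabilityMeasure μa]
    [IsProbabilityMeasure νc] [IsProbabilityMeasure νa]
    (ε₁ ε₂ : ℝ) (hε₁ : ε₁ ∈ Set.Icc (0 : ℝ) 1) (hε₂ : ε₂ ∈ Set.Icc (0 : ℝ) 1)
    (μ : Measure X) (ν : Measure Y)
    (hμ : μ = ENNReal.ofReal (1 - ε₁) • μc + ENNReal.ofReal ε₁ • μa)
    (hν : ν = ENNReal.ofReal (1 - ε₂) • νc + ENNReal.ofReal ε₂ • νa)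
    (hμac_fin : KLdiv μa μc ≠ ⊤) (hμac_pos : 0 < KLdiv μa μc)
    (hνac_fin : KLdiv νa νc ≠ ⊤) (hνac_pos : 0 < KLdiv νa νc)
    (hμca_fin : KLdiv μc μa ≠ ⊤) (hνca_fin : KLdiv νc νa ≠ ⊤)
    (ρ₁ ρ₂ τ₁ τ₂ : ℝ) (hτ₁ : 0 ≤ τ₁) (hτ₂ : 0 ≤ τ₂)
    (hρ₁ : ρ₁ = ε₁ * (KLdiv μa μc).toReal)
    (hρ₂ : ρ₂ = ε₂ * (KLdiv νa νc).toReal) :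
    GWrob ρ₁ ρ₂ τ₁ τ₂ μ ν ≤ GW μc νc :=
  rgw_upper_bound_tight_general μc μa νc νa ε₁ ε₂ hε₁ hε₂ μ ν hμ hν hμac_fin hνac_fin ρ₁ ρ₂ τ₁ τ₂
    hρ₁ hρ₂
end

section
/- Let μ_c and μ_a be Borel probability measures on a Polish space X, let ε ∈ [0,1], and set μ = (1−ε)μ_c + ε·μ_a. Then for every γ ∈ [0,1]: KL(μ, (1−γ)μ + γμ_c) ≤ γ·ε·KL(μ_a, μ_c). -/
/-!
Both inequalities are pointwise statements about densities with respect to `μc`. If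
`g = dμ/dμc`, the mixture `(1 - γ)μ + γμc` has density `(1 - γ)g + γ`, and concavity of `log`
gives `log g - log ((1 - γ)g + γ) ≤ γ log g`; integrating against `μ` yields
`KL(μ, (1 - γ)μ + γμc) ≤ γ KL(μ, μc)`. If `f = dμa/dμc`, then `g = (1 - ε) + εf`, and convexity
of `t log t`, which vanishes at `t = 1`, gives `g log g ≤ ε f log f`; integrating against `μc`
yields `KL(μ, μc) ≤ ε KL(μa, μc)`.
-/

open MeasureTheory ENNReal Classical

lemma one_sub_mul_log_le_log_one_sub_mul_add {g γ : ℝ} (hg : 0 < g) (hγ0 : 0 ≤ γ)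
    (hγ1 : γ ≤ 1) : (1 - γ) * Real.log g ≤ Real.log ((1 - γ) * g + γ) := by
  have h := strictConcaveOn_log_Ioi.concaveOn.2 (Set.mem_Ioi.2 hg) (Set.mem_Ioi.2 one_pos)
    (sub_nonneg.2 hγ1) hγ0 (by ring)
  simpa only [smul_eq_mul, mul_one, Real.log_one, mul_zero, add_zero] using h

lemma abs_log_one_sub_mul_add_le {g γ : ℝ} (hg : 0 < g) (hγ0 : 0 ≤ γ) (hγ1 : γ ≤ 1) :
    |Real.log ((1 - γ) * g + γ)| ≤ |Real.log g| := by
  have hγ1' : 0 ≤ 1 - γ := sub_nonneg.2 hγ1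
  have hbounds : min g 1 ≤ (1 - γ) * g + γ ∧ (1 - γ) * g + γ ≤ max g 1 := by
    rcases le_total g 1 with h | h
    · rw [min_eq_left h, max_eq_right h]; constructor <;> nlinarith
    · rw [min_eq_right h, max_eq_left h]; constructor <;> nlinarith
  have hpos : 0 < (1 - γ) * g + γ := (lt_min hg one_pos).trans_le hbounds.1
  have hupper : Real.log ((1 - γ) * g + γ) ≤ |Real.log g| := by
    refine (Real.log_le_log hpos hbounds.2).trans ?_
    rcases le_total g 1 with h | h
    · simp [max_eq_right h]
    · simpa [max_eq_left h] using le_abs_self _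
  have hlower := one_sub_mul_log_le_log_one_sub_mul_add hg hγ0 hγ1
  refine abs_le.2 ⟨?_, hupper⟩
  nlinarith [neg_abs_le (Real.log g), abs_nonneg (Real.log g)]

lemma mul_log_one_sub_add_mul_le {f ε : ℝ} (hf : 0 ≤ f) (hε0 : 0 ≤ ε) (hε1 : ε ≤ 1) :
    (1 - ε + ε * f) * Real.log (1 - ε + ε * f) ≤ ε * (f * Real.log f) := by
  have h := Real.convexOn_mul_log.2 (Set.mem_Ici.2 zero_le_one) (Set.mem_Ici.2 hf)
    (sub_nonneg.2 hε1) hε0 (by ring)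
  simpa only [smul_eq_mul, mul_one, Real.log_one, mul_zero, zero_add] using h

section

variable {X : Type*} [MeasurableSpace X]

instance isFiniteMeasure_ofReal_smul (μ : Measure X) [IsFiniteMeasure μ] (c : ℝ) :
    IsFiniteMeasure (ENNReal.ofReal c • μ) :=
  inferInstanceAs (IsFiniteMeasure (c.toNNReal • μ))

lemma KLdiv_self (ρ : Measure X) [SigmaFinite ρ] : KLdiv ρ ρ = 0 := by
  have h := llr_self ρ
  rw [KLdiv, if_pos ⟨Measure.AbsolutelyContinuous.rfl, (integrable_congr h).2 (integrable_zero ..)⟩,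
    integral_congr_ae h]
  simp

lemma KLdiv_le_ofReal_mul {ρ σ ρ' σ' : Measure X} {c : ℝ} (hc : 0 < c)
    (h : ρ' ≪ σ' → Integrable (llr ρ' σ') ρ' →
      ρ ≪ σ ∧ Integrable (llr ρ σ) ρ ∧ ∫ x, llr ρ σ x ∂ρ ≤ c * ∫ x, llr ρ' σ' x ∂ρ') :
    KLdiv ρ σ ≤ ENNReal.ofReal c * KLdiv ρ' σ' := by
  by_cases h' : ρ' ≪ σ' ∧ Integrable (llr ρ' σ') ρ'
  · obtain ⟨hac, hint, hle⟩ := h h'.1 h'.2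
    rw [KLdiv, if_pos ⟨hac, hint⟩, KLdiv, if_pos h', ← ENNReal.ofReal_mul hc.le]
    exact ENNReal.ofReal_le_ofReal hle
  · rw [show KLdiv ρ' σ' = ⊤ from if_neg h', ENNReal.mul_top (by simpa using hc)]
    exact le_top

lemma toReal_rnDeriv_smul_add_smul_self (μ ρ : Measure X) [IsFiniteMeasure μ] [IsFiniteMeasure ρ]
    {a b : ℝ} (ha : 0 ≤ a) (hb : 0 ≤ b) :
    ∀ᵐ x ∂ρ, ((ENNReal.ofReal a • μ + ENNReal.ofReal b • ρ).rnDeriv ρ x).toReal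
      = a * (μ.rnDeriv ρ x).toReal + b := by
  filter_upwards [Measure.rnDeriv_add' (ENNReal.ofReal a • μ) (ENNReal.ofReal b • ρ) ρ,
    Measure.rnDeriv_smul_left_of_ne_top μ ρ ENNReal.ofReal_ne_top,
    Measure.rnDeriv_smul_left_of_ne_top ρ ρ ENNReal.ofReal_ne_top,
    Measure.rnDeriv_self ρ, Measure.rnDeriv_lt_top μ ρ] with x hsum hμ hρ hself hfin
  rw [hsum, Pi.add_apply, hμ, hρ, Pi.smul_apply, Pi.smul_apply, hself, smul_eq_mul, smul_eq_mul,
    mul_one, ENNReal.toReal_add (ENNReal.mul_ne_top ENNReal.ofReal_ne_top hfin.ne)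
      ENNReal.ofReal_ne_top, ENNReal.toReal_mul, ENNReal.toReal_ofReal ha,
    ENNReal.toReal_ofReal hb]

lemma llr_ae_eq_llr_sub_llr {μ ν ρ : Measure X} [SigmaFinite μ] [SigmaFinite ν] [SigmaFinite ρ]
    (hμν : μ ≪ ν) (hνρ : ν ≪ ρ) : llr μ ν =ᵐ[μ] llr μ ρ - llr ν ρ := by
  have hμρ := hμν.trans hνρ
  filter_upwards [hμρ.ae_le (Measure.rnDeriv_mul_rnDeriv (κ := ρ) hμν),
    Measure.rnDeriv_pos hμν, hμν.ae_le (Measure.rnDeriv_pos hνρ),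
    hμν.ae_le (Measure.rnDeriv_lt_top μ ν), hμρ.ae_le (Measure.rnDeriv_lt_top ν ρ)]
    with x hmul hμν_pos hνρ_pos hμν_fin hνρ_fin
  rw [Pi.sub_apply, llr, llr, llr, ← hmul, Pi.mul_apply, ENNReal.toReal_mul,
    Real.log_mul (ENNReal.toReal_pos hμν_pos.ne' hμν_fin.ne).ne'
      (ENNReal.toReal_pos hνρ_pos.ne' hνρ_fin.ne).ne']
  ring

theorem KLdiv_smul_add_smul_right_le (μ ρ : Measure X) [IsFiniteMeasure μ] [IsFiniteMeasure ρ]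
    {γ : ℝ} (hγ0 : 0 ≤ γ) (hγ1 : γ ≤ 1) :
    KLdiv μ (ENNReal.ofReal (1 - γ) • μ + ENNReal.ofReal γ • ρ) ≤
      ENNReal.ofReal γ * KLdiv μ ρ := by
  rcases hγ0.eq_or_lt with rfl | hγ
  · simp [KLdiv_self]
  set ν := ENNReal.ofReal (1 - γ) • μ + ENNReal.ofReal γ • ρ
  refine KLdiv_le_ofReal_mul hγ fun hμρ hint => ?_
  have hρν : ρ ≪ ν :=
    (Measure.absolutelyContinuous_smul (by simpa using hγ)).add_right' _
  have hνρ : ν ≪ ρ := (hμρ.smul_left _).add_left (Measure.AbsolutelyContinuous.rfl.smul_left _)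
  have hμν : μ ≪ ν := hμρ.trans hρν
  have hdens : ∀ᵐ x ∂μ, llr ν ρ x = Real.log ((1 - γ) * (μ.rnDeriv ρ x).toReal + γ) := by
    filter_upwards [hμρ.ae_le (toReal_rnDeriv_smul_add_smul_self μ ρ (sub_nonneg.2 hγ1) hγ0)]
      with x hx
    rw [llr, hx]
  have hpos : ∀ᵐ x ∂μ, 0 < (μ.rnDeriv ρ x).toReal := by
    filter_upwards [Measure.rnDeriv_pos hμρ, hμρ.ae_le (Measure.rnDeriv_lt_top μ ρ)] with x h0 hfin
    exact ENNReal.toReal_pos h0.ne' hfin.ne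
  have hint_ν : Integrable (llr ν ρ) μ := by
    refine hint.abs.mono' (measurable_llr ν ρ).aestronglyMeasurable ?_
    filter_upwards [hdens, hpos] with x hx hx0
    rw [Real.norm_eq_abs, hx]
    exact abs_log_one_sub_mul_add_le hx0 hγ0 hγ1
  have hllr := llr_ae_eq_llr_sub_llr hμν hνρ
  refine ⟨hμν, (hint.sub hint_ν).congr hllr.symm, ?_⟩
  rw [← integral_const_mul, integral_congr_ae hllr]
  refine integral_mono_ae (hint.sub hint_ν) (hint.const_mul γ) ?_
  filter_upwards [hdens, hpos] with x hx hx0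
  rw [Pi.sub_apply, hx, llr]
  linarith [one_sub_mul_log_le_log_one_sub_mul_add hx0 hγ0 hγ1]

theorem KLdiv_smul_add_smul_left_le (ρ σ : Measure X) [IsFiniteMeasure ρ] [IsFiniteMeasure σ]
    {ε : ℝ} (hε0 : 0 ≤ ε) (hε1 : ε ≤ 1) :
    KLdiv (ENNReal.ofReal (1 - ε) • ρ + ENNReal.ofReal ε • σ) ρ ≤
      ENNReal.ofReal ε * KLdiv σ ρ := by
  rcases hε0.eq_or_lt with rfl | hε
  · simp [KLdiv_self]
  set μ := ENNReal.ofReal (1 - ε) • ρ + ENNReal.ofReal ε • σ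
  refine KLdiv_le_ofReal_mul hε fun hσρ hint => ?_
  have hμρ : μ ≪ ρ := (Measure.AbsolutelyContinuous.rfl.smul_left _).add_left (hσρ.smul_left _)
  have hdens : ∀ᵐ x ∂ρ, (μ.rnDeriv ρ x).toReal = 1 - ε + ε * (σ.rnDeriv ρ x).toReal := by
    filter_upwards [toReal_rnDeriv_smul_add_smul_self σ ρ hε0 (sub_nonneg.2 hε1)] with x hx
    rw [show μ = ENNReal.ofReal ε • σ + ENNReal.ofReal (1 - ε) • ρ from add_comm _ _, hx]
    ring
  have hint_σ := (integrable_rnDeriv_mul_log_iff hσρ).2 hint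
  have hbound : ∀ᵐ x ∂ρ, -1 ≤ (μ.rnDeriv ρ x).toReal * Real.log (μ.rnDeriv ρ x).toReal ∧
      (μ.rnDeriv ρ x).toReal * Real.log (μ.rnDeriv ρ x).toReal ≤
        ε * ((σ.rnDeriv ρ x).toReal * Real.log (σ.rnDeriv ρ x).toReal) := by
    filter_upwards [hdens] with x hx
    have hkl := InformationTheory.klFun_nonneg (ENNReal.toReal_nonneg (a := μ.rnDeriv ρ x))
    rw [InformationTheory.klFun_apply] at hkl
    refine ⟨by linarith [ENNReal.toReal_nonneg (a := μ.rnDeriv ρ x)], ?_⟩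
    rw [hx]
    exact mul_log_one_sub_add_mul_le ENNReal.toReal_nonneg hε0 hε1
  have hint_μ : Integrable
      (fun x => (μ.rnDeriv ρ x).toReal * Real.log (μ.rnDeriv ρ x).toReal) ρ := by
    refine ((hint_σ.abs.const_mul ε).add (integrable_const 1)).mono' ?_ ?_
    · exact (Measure.measurable_rnDeriv μ ρ).ennreal_toReal.mul
        (measurable_llr μ ρ) |>.aestronglyMeasurable
    · filter_upwards [hbound] with x ⟨hlow, hup⟩
      set t := (σ.rnDeriv ρ x).toReal * Real.log (σ.rnDeriv ρ x).toReal
      have hεt : ε * t ≤ ε * |t| := mul_le_mul_of_nonneg_left (le_abs_self t) hε0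
      have hεt0 : 0 ≤ ε * |t| := mul_nonneg hε0 (abs_nonneg t)
      rw [Real.norm_eq_abs, abs_le, Pi.add_apply]
      constructor <;> linarith
  refine ⟨hμρ, (integrable_rnDeriv_mul_log_iff hμρ).1 hint_μ, ?_⟩
  rw [← integral_rnDeriv_mul_log hμρ, ← integral_rnDeriv_mul_log hσρ, ← integral_const_mul]
  exact integral_mono_ae hint_μ (hint_σ.const_mul ε) (hbound.mono fun x hx => hx.2)

end

theorem kl_contaminated_to_mixture_general
    {X : Type*} [MeasurableSpace X]
    (μc μa : Measure X) [IsProbabilityMeasure μc] [IsProbabilityMeasure μa]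
    (ε : ℝ) (hε : ε ∈ Set.Icc (0 : ℝ) 1)
    (μ : Measure X) (hμ : μ = ENNReal.ofReal (1 - ε) • μc + ENNReal.ofReal ε • μa)
    (γ : ℝ) (hγ : γ ∈ Set.Icc (0 : ℝ) 1) :
    KLdiv μ (ENNReal.ofReal (1 - γ) • μ + ENNReal.ofReal γ • μc) ≤
      ENNReal.ofReal (γ * ε) * KLdiv μa μc := by
  obtain ⟨hε0, hε1⟩ := hε
  obtain ⟨hγ0, hγ1⟩ := hγ
  subst hμ
  calc _ ≤ ENNReal.ofReal γ * KLdiv (ENNReal.ofReal (1 - ε) • μc + ENNReal.ofReal ε • μa) μc :=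
        KLdiv_smul_add_smul_right_le _ _ hγ0 hγ1
    _ ≤ ENNReal.ofReal γ * (ENNReal.ofReal ε * KLdiv μa μc) := by
        gcongr
        exact KLdiv_smul_add_smul_left_le _ _ hε0 hε1
    _ = ENNReal.ofReal (γ * ε) * KLdiv μa μc := by rw [← mul_assoc, ENNReal.ofReal_mul hγ0]

/-- Feasibility step in the proof of Theorem 1:
`KL(μ, (1-γ)μ + γμ_c) ≤ γ ε KL(μ_a, μ_c)` for the Huber contamination `μ = (1-ε)μ_c + ε μ_a`. -/
theorem kl_contaminated_to_mixture
    {X : Type*} [MetricSpace X] [CompleteSpace X] [SecondCountableTopology X]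
    [MeasurableSpace X] [BorelSpace X]
    (μc μa : Measure X) [IsProbabilityMeasure μc] [IsProbabilityMeasure μa]
    (ε : ℝ) (hε : ε ∈ Set.Icc (0 : ℝ) 1)
    (μ : Measure X) (hμ : μ = ENNReal.ofReal (1 - ε) • μc + ENNReal.ofReal ε • μa)
    (γ : ℝ) (hγ : γ ∈ Set.Icc (0 : ℝ) 1) :
    KLdiv μ (ENNReal.ofReal (1 - γ) • μ + ENNReal.ofReal γ • μc) ≤
      ENNReal.ofReal (γ * ε) * KLdiv μa μc :=
  kl_contaminated_to_mixture_general μc μa ε hε μ hμ γ hγ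
end

section
/- Let n ≥ 1, let a ∈ ℝ^n with a_i ≥ 0, let b, μ ∈ Δ^n with all entries strictly positive, and let c > 0 and ρ > 0. For w ≥ 0 define α̂(w) ∈ Δ^n by α̂(w)_i = (a_i + b_i/c + w·μ_i)/(∑_j a_j + 1/c + w), and p(w) = ∑_i μ_i log(μ_i/α̂(w)_i) − ρ. Define H(α) = ∑_i (a_i log(a_i/α_i) − a_i + α_i) + (1/c)·∑_i b_i log(b_i/α_i) (with convention 0·log 0 = 0). If either (i) w = 0 and p(0) ≤ 0, or (ii) w > 0 and p(w) = 0, then α̂(w) minimizes H over the feasible set {α ∈ Δ^n : all α_i > 0 and ∑_i μ_i log(μ_i/α_i) ≤ ρ}, i.e., H(α̂(w)) ≤ H(α) for every α in this set. -/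
open Finset Real

/-!
Adjoining the KL constraint with multiplier `w ≥ 0` gives the Lagrangian `H + w • KL(μ ‖ ·)`,
which on the simplex is a constant minus `∑ i, q i * log (α i)` with
`q i = a i + b i / c + w * μ i`. By Gibbs' inequality this is minimized at `α ∝ q`, that is at
`α̂(w)`. Complementary slackness, `w * p w = 0`, turns this into `H (α̂ w) ≤ H α` for every
feasible `α`, since there `w * KL(μ ‖ α) ≤ w * ρ`.
-/

theorem mul_log_div_eq_sub (x : ℝ) {y : ℝ} (hy : y ≠ 0) :
    x * log (x / y) = x * log x - x * log y := by
  rcases eq_or_ne x 0 with rfl | hx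
  · simp
  · rw [log_div hx hy, mul_sub]

theorem mul_log_le_mul_log_div_add {q β S : ℝ} (hq : 0 ≤ q) (hβ : 0 < β) (hS : 0 < S) :
    q * log β ≤ q * log (q / S) + (S * β - q) := by
  rcases hq.eq_or_lt with rfl | hq
  · simp only [zero_mul, zero_div, log_zero, mul_zero, sub_zero, zero_add]
    positivity
  · have h := log_le_sub_one_of_pos (show 0 < S * β / q by positivity)
    rw [show S * β / q = β / (q / S) by field_simp, log_div hβ.ne' (by positivity)] at h
    have := mul_le_mul_of_nonneg_left h hq.le
    rw [show q * (β / (q / S) - 1) = S * β - q by field_simp] at this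
    linarith

theorem sum_mul_log_le_sum_mul_log_div_sum {ι : Type*} [Fintype ι] {q β : ι → ℝ}
    (hq : ∀ i, 0 ≤ q i) (hβ : ∀ i, 0 < β i) (hβsum : ∑ i, β i = 1) :
    ∑ i, q i * log (β i) ≤ ∑ i, q i * log (q i / ∑ j, q j) := by
  rcases (sum_nonneg fun i _ => hq i).eq_or_lt with hS | hS
  · have hzero : ∀ i, q i = 0 := fun i =>
      (sum_eq_zero_iff_of_nonneg fun i _ => hq i).1 hS.symm i (mem_univ i)
    simp [hzero]
  · calc ∑ i, q i * log (β i)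
        ≤ ∑ i, (q i * log (q i / ∑ j, q j) + ((∑ j, q j) * β i - q i)) :=
          sum_le_sum fun i _ => mul_log_le_mul_log_div_add (hq i) (hβ i) hS
      _ = ∑ i, q i * log (q i / ∑ j, q j) := by
          rw [sum_add_distrib, sum_sub_distrib, ← mul_sum, hβsum]; ring

noncomputable section
variable {ι : Type*} [Fintype ι]

def alphaObjective (a b : ι → ℝ) (c : ℝ) (α : ι → ℝ) : ℝ :=
  ∑ i, (a i * log (a i / α i) - a i + α i) + (1 / c) * ∑ i, b i * log (b i / α i)

def alphaHat (a b μ : ι → ℝ) (c w : ℝ) (i : ι) : ℝ :=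
  (a i + b i / c + w * μ i) / ((∑ j, a j) + 1 / c + w)

theorem alphaObjective_add_mul_sum_mul_log_div_eq (a b μ : ι → ℝ) (c w : ℝ) {β : ι → ℝ}
    (hβ : ∀ i, β i ≠ 0) :
    alphaObjective a b c β + w * ∑ i, μ i * log (μ i / β i) =
      (∑ i, (a i * log (a i) - a i)) + (1 / c) * ∑ i, b i * log (b i)
        + w * ∑ i, μ i * log (μ i) + ∑ i, β i
        - ∑ i, (a i + b i / c + w * μ i) * log (β i) := by
  have hsplit : ∀ x i, x * log (x / β i) = x * log x - x * log (β i) :=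
    fun x i => mul_log_div_eq_sub x (hβ i)
  simp only [alphaObjective, hsplit]
  simp only [mul_sub, mul_sum, sum_add_distrib, sum_sub_distrib, add_mul, ← mul_assoc, mul_one,
    div_eq_inv_mul]
  ring

theorem alphaHat_eq_div_sum {a b μ : ι → ℝ} {c : ℝ} (w : ℝ)
    (hbsum : ∑ i, b i = 1) (hμsum : ∑ i, μ i = 1) :
    alphaHat a b μ c w = fun i => (a i + b i / c + w * μ i) / ∑ j, (a j + b j / c + w * μ j) := by
  rw [sum_add_distrib, sum_add_distrib, ← sum_div, hbsum, ← mul_sum, hμsum, mul_one]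
  rfl

variable {a b μ : ι → ℝ} {c w : ℝ}

theorem alphaObjective_add_mul_sum_mul_log_div_alphaHat_le (ha : ∀ i, 0 ≤ a i)
    (hb : ∀ i, 0 < b i) (hbsum : ∑ i, b i = 1) (hμ : ∀ i, 0 < μ i) (hμsum : ∑ i, μ i = 1)
    (hc : 0 < c) (hw : 0 ≤ w) {β : ι → ℝ} (hβ : ∀ i, 0 < β i) (hβsum : ∑ i, β i = 1) :
    alphaObjective a b c (alphaHat a b μ c w) + w * ∑ i, μ i * log (μ i / alphaHat a b μ c w i) ≤
      alphaObjective a b c β + w * ∑ i, μ i * log (μ i / β i) := by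
  have hq : ∀ i, 0 < a i + b i / c + w * μ i := fun i =>
    add_pos_of_pos_of_nonneg (add_pos_of_nonneg_of_pos (ha i) (div_pos (hb i) hc))
      (mul_nonneg hw (hμ i).le)
  have hqsum : 0 < ∑ j, (a j + b j / c + w * μ j) :=
    sum_pos (fun j _ => hq j) (nonempty_of_sum_ne_zero (hβsum ▸ one_ne_zero))
  have hhat := alphaHat_eq_div_sum (a := a) (c := c) w hbsum hμsum
  have hhat_pos : ∀ i, 0 < alphaHat a b μ c w i := by
    simp only [hhat]; exact fun i => div_pos (hq i) hqsum
  have hhat_sum : ∑ i, alphaHat a b μ c w i = 1 := by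
    simp only [hhat]; rw [← sum_div, div_self hqsum.ne']
  have gibbs := sum_mul_log_le_sum_mul_log_div_sum (fun i => (hq i).le) hβ hβsum
  rw [alphaObjective_add_mul_sum_mul_log_div_eq a b μ c w fun i => (hhat_pos i).ne',
    alphaObjective_add_mul_sum_mul_log_div_eq a b μ c w fun i => (hβ i).ne', hhat_sum, hβsum]
  simp only [hhat]
  linarith

end

theorem alpha_subproblem_dual_optimality_general
    (n : ℕ) (a b μ : Fin n → ℝ)
    (ha : ∀ i, 0 ≤ a i)
    (hb : ∀ i, 0 < b i) (hbsum : ∑ i, b i = 1)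
    (hμ : ∀ i, 0 < μ i) (hμsum : ∑ i, μ i = 1)
    (c ρ : ℝ) (hc : 0 < c)
    (αhat : ℝ → Fin n → ℝ)
    (hαhat : αhat = fun w i => (a i + b i / c + w * μ i) / ((∑ j, a j) + 1 / c + w))
    (p : ℝ → ℝ)
    (hp : p = fun w => (∑ i, μ i * Real.log (μ i / αhat w i)) - ρ)
    (H : (Fin n → ℝ) → ℝ)
    (hH : H = fun α => ∑ i, (a i * Real.log (a i / α i) - a i + α i)
      + (1 / c) * ∑ i, b i * Real.log (b i / α i))
    (w : ℝ) (hw : (w = 0 ∧ p 0 ≤ 0) ∨ (0 < w ∧ p w = 0)) :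
    ∀ α : Fin n → ℝ, (∀ i, 0 < α i) → (∑ i, α i = 1) →
      (∑ i, μ i * Real.log (μ i / α i)) ≤ ρ → H (αhat w) ≤ H α := by
  intro α hαpos hαsum hαfeas
  subst hαhat hp hH
  have hw0 : 0 ≤ w := by
    rcases hw with ⟨rfl, _⟩ | ⟨hwpos, _⟩
    exacts [le_rfl, hwpos.le]
  have hslack : w * ∑ i, μ i * log (μ i / alphaHat a b μ c w i) = w * ρ := by
    rcases hw with ⟨rfl, _⟩ | ⟨_, hpw⟩
    · simp only [zero_mul]
    · have hKL : ∑ i, μ i * log (μ i / alphaHat a b μ c w i) = ρ := sub_eq_zero.1 hpw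
      rw [hKL]
  have hmin := alphaObjective_add_mul_sum_mul_log_div_alphaHat_le ha hb hbsum hμ hμsum hc hw0
    hαpos hαsum
  change alphaObjective a b c (alphaHat a b μ c w) ≤ alphaObjective a b c α
  linarith [mul_le_mul_of_nonneg_left hαfeas hw0]

/-- Optimality of the dual multiplier for the `α`-subproblem: if `w = 0` with `p(0) ≤ 0`,
or `w > 0` with `p(w) = 0`, then `α̂(w)` minimizes `H` over the KL-constrained simplex. -/
theorem alpha_subproblem_dual_optimality
    (n : ℕ) (hn : 1 ≤ n) (a b μ : Fin n → ℝ)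
    (ha : ∀ i, 0 ≤ a i)
    (hb : ∀ i, 0 < b i) (hbsum : ∑ i, b i = 1)
    (hμ : ∀ i, 0 < μ i) (hμsum : ∑ i, μ i = 1)
    (c ρ : ℝ) (hc : 0 < c) (hρ : 0 < ρ)
    (αhat : ℝ → Fin n → ℝ)
    (hαhat : αhat = fun w i => (a i + b i / c + w * μ i) / ((∑ j, a j) + 1 / c + w))
    (p : ℝ → ℝ)
    (hp : p = fun w => (∑ i, μ i * Real.log (μ i / αhat w i)) - ρ)
    (H : (Fin n → ℝ) → ℝ)
    (hH : H = fun α => ∑ i, (a i * Real.log (a i / α i) - a i + α i)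
      + (1 / c) * ∑ i, b i * Real.log (b i / α i))
    (w : ℝ) (hw : (w = 0 ∧ p 0 ≤ 0) ∨ (0 < w ∧ p w = 0)) :
    ∀ α : Fin n → ℝ, (∀ i, 0 < α i) → (∑ i, α i = 1) →
      (∑ i, μ i * Real.log (μ i / α i)) ≤ ρ → H (αhat w) ≤ H α :=
  alpha_subproblem_dual_optimality_general n a b μ ha hb hbsum hμ hμsum c ρ hc αhat hαhat p hp H hH
    w hw
end
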